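/- arXiv:2112.14886 — 3 statements merged into one kernel-verified Lean document; each statement's English description precedes it below -/
import Mathlib

section
/- Let α > 0 be a real number, let λ ∈ (0,1), and let n be a positive integer. Let (X_j)_{1≤j≤n} be independent Bernoulli random variables with P{X_j = 1} = 1/j, and set Y_n = X_1 + ⋯ + X_n. Let (X_{j,λ}(α))_{1≤j≤n} be independent Bernoulli random variables with P{X_{j,λ}(α) = 1} = α/(α + λj), and set Z_{n,λ}(α) = X_{1,λ}(α) + ⋯ + X_{n,λ}(α). Then for every real number z, E[(1 + α/λ)^{Y_n}] · E[z^{Z_{n,λ}(α)}] = E[(1 + αz/λ)^{Y_n}]. -/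
/-!
Both sides factor over `j`, since the expectation of `c ^ (sum of independent Bernoulli variables)`
is `∏ j, (1 + (c - 1) pⱼ)`. The theorem is then the identity of the `j`-th factors,
`(1 + α / (λ j)) (1 + (z - 1) α / (α + λ j)) = 1 + α z / (λ j)`: the first factor is
`(α + λ j) / (λ j)` and cancels the denominator of the second.
-/

open MeasureTheory ProbabilityTheory Finset

@[to_additive]
lemma Finset.prod_Icc_eq_prod_univ_fin_succ {M : Type*} [CommMonoid M] (n : ℕ) (f : ℕ → M) :
    ∏ j ∈ Icc 1 n, f j = ∏ i : Fin n, f (i + 1) := by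
  rw [Fin.prod_univ_eq_prod_range (fun i => f (i + 1)), range_eq_Ico, prod_Ico_add', zero_add,
    Ico_add_one_right_eq_Icc]

section

variable {Ω : Type*} [MeasurableSpace Ω] {μ : Measure Ω}

lemma integral_pow_of_bernoulli [IsProbabilityMeasure μ] {X : Ω → ℕ} (hX : Measurable X)
    (hval : ∀ ω, X ω = 0 ∨ X ω = 1) (c : ℝ) :
    ∫ ω, c ^ X ω ∂μ = 1 + (c - 1) * μ.real {ω | X ω = 1} := by
  have hA : MeasurableSet {ω | X ω = 1} := hX (measurableSet_singleton 1)
  have hpow : (fun ω => c ^ X ω) = fun ω => 1 + {ω | X ω = 1}.indicator (fun _ => c - 1) ω := by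
    funext ω
    rcases hval ω with h | h <;> simp [h]
  rw [hpow, integral_add (integrable_const 1) ((integrable_const _).indicator hA),
    integral_indicator_const _ hA, integral_const, probReal_univ, smul_eq_mul, smul_eq_mul,
    one_mul, mul_comm]

lemma ProbabilityTheory.iIndepFun.integral_pow_sum {ι : Type*} [Fintype ι] {X : ι → Ω → ℕ}
    (hindep : iIndepFun X μ) (hX : ∀ i, Measurable (X i)) (c : ℝ) :
    ∫ ω, c ^ (∑ i, X i ω) ∂μ = ∏ i, ∫ ω, c ^ X i ω ∂μ := by
  simp_rw [← prod_pow_eq_pow_sum]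
  exact hindep.integral_fun_prod_comp (fun i => (hX i).aemeasurable)
    (fun _ => measurable_from_top.aestronglyMeasurable)

lemma integral_pow_sum_Icc_of_bernoulli [IsProbabilityMeasure μ] (n : ℕ) {X : ℕ → Ω → ℕ}
    (hX : ∀ j, Measurable (X j)) (hindep : iIndepFun (fun i : Fin n => X (i.1 + 1)) μ)
    (hval : ∀ j ∈ Icc 1 n, ∀ ω, X j ω = 0 ∨ X j ω = 1) (c : ℝ) :
    ∫ ω, c ^ (∑ j ∈ Icc 1 n, X j ω) ∂μ
      = ∏ j ∈ Icc 1 n, (1 + (c - 1) * μ.real {ω | X j ω = 1}) := by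
  have hmem (i : Fin n) : i.1 + 1 ∈ Icc 1 n := mem_Icc.2 ⟨le_add_self, i.2⟩
  simp_rw [sum_Icc_eq_sum_univ_fin_succ, prod_Icc_eq_prod_univ_fin_succ,
    hindep.integral_pow_sum (fun i => hX _) c]
  exact prod_congr rfl fun i _ => integral_pow_of_bernoulli (hX _) (hval _ (hmem i)) c

end

lemma dimorphic_factor_identity {α l j : ℝ} (hl : l ≠ 0) (hj : j ≠ 0) (hden : α + l * j ≠ 0)
    (z : ℝ) :
    (1 + (1 + α / l - 1) * (1 / j)) * (1 + (z - 1) * (α / (α + l * j)))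
      = 1 + (1 + α * z / l - 1) * (1 / j) := by
  field_simp
  ring

theorem dimorphic_property_bernoulli_general
    {Ω₁ : Type*} [MeasurableSpace Ω₁] (μ₁ : Measure Ω₁) [IsProbabilityMeasure μ₁]
    {Ω₂ : Type*} [MeasurableSpace Ω₂] (μ₂ : Measure Ω₂) [IsProbabilityMeasure μ₂]
    (α l : ℝ) (hα : 0 < α) (hl : l ∈ Set.Ioo (0 : ℝ) 1)
    (n : ℕ)
    (X : ℕ → Ω₁ → ℕ)
    (hXmeas : ∀ j, Measurable (X j))
    (hXindep : iIndepFun (fun i : Fin n => X (i.1 + 1)) μ₁)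
    (hXval : ∀ j ∈ Finset.Icc 1 n, ∀ ω, X j ω = 0 ∨ X j ω = 1)
    (hXp1 : ∀ j ∈ Finset.Icc 1 n, μ₁ {ω | X j ω = 1} = ENNReal.ofReal (1 / (j : ℝ)))
    (X' : ℕ → Ω₂ → ℕ)
    (hX'meas : ∀ j, Measurable (X' j))
    (hX'indep : iIndepFun (fun i : Fin n => X' (i.1 + 1)) μ₂)
    (hX'val : ∀ j ∈ Finset.Icc 1 n, ∀ ω, X' j ω = 0 ∨ X' j ω = 1)
    (hX'p1 : ∀ j ∈ Finset.Icc 1 n,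
      μ₂ {ω | X' j ω = 1} = ENNReal.ofReal (α / (α + l * j))) :
    ∀ z : ℝ,
      (∫ ω, (1 + α / l) ^ (∑ j ∈ Finset.Icc 1 n, X j ω) ∂μ₁)
        * (∫ ω, z ^ (∑ j ∈ Finset.Icc 1 n, X' j ω) ∂μ₂)
      = ∫ ω, (1 + α * z / l) ^ (∑ j ∈ Finset.Icc 1 n, X j ω) ∂μ₁ := by
  intro z
  simp_rw [integral_pow_sum_Icc_of_bernoulli n hXmeas hXindep hXval,
    integral_pow_sum_Icc_of_bernoulli n hX'meas hX'indep hX'val, ← prod_mul_distrib]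
  refine prod_congr rfl fun j hj => ?_
  have hj0 : (0 : ℝ) < j := by exact_mod_cast (mem_Icc.1 hj).1
  have hden : 0 < α + l * j := by nlinarith [hl.1]
  rw [measureReal_def, measureReal_def, hXp1 j hj, hX'p1 j hj,
    ENNReal.toReal_ofReal (by positivity), ENNReal.toReal_ofReal (by positivity)]
  exact dimorphic_factor_identity hl.1.ne' hj0.ne' hden.ne' z

/-- dimorphic property, Theorem 2: with `Y = X 1 + ⋯ + X n` a sum of
independent Bernoulli random variables with success probabilities `1/j`, and
`Z = X' 1 + ⋯ + X' n` a sum of independent Bernoulli random variables with success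
probabilities `α/(α + λj)`, one has for every real `z`
`E[(1 + α/λ)^Y] ⬝ E[z^Z] = E[(1 + αz/λ)^Y]`. -/
theorem dimorphic_property_bernoulli
    {Ω₁ : Type*} [MeasurableSpace Ω₁] (μ₁ : Measure Ω₁) [IsProbabilityMeasure μ₁]
    {Ω₂ : Type*} [MeasurableSpace Ω₂] (μ₂ : Measure Ω₂) [IsProbabilityMeasure μ₂]
    (α l : ℝ) (hα : 0 < α) (hl : l ∈ Set.Ioo (0 : ℝ) 1)
    (n : ℕ) (hn : 0 < n)
    (X : ℕ → Ω₁ → ℕ)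
    (hXmeas : ∀ j, Measurable (X j))
    (hXindep : iIndepFun (fun i : Fin n => X (i.1 + 1)) μ₁)
    (hXval : ∀ j ∈ Finset.Icc 1 n, ∀ ω, X j ω = 0 ∨ X j ω = 1)
    (hXp1 : ∀ j ∈ Finset.Icc 1 n, μ₁ {ω | X j ω = 1} = ENNReal.ofReal (1 / (j : ℝ)))
    (hXp0 : ∀ j ∈ Finset.Icc 1 n, μ₁ {ω | X j ω = 0} = ENNReal.ofReal (1 - 1 / (j : ℝ)))
    (X' : ℕ → Ω₂ → ℕ)
    (hX'meas : ∀ j, Measurable (X' j))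
    (hX'indep : iIndepFun (fun i : Fin n => X' (i.1 + 1)) μ₂)
    (hX'val : ∀ j ∈ Finset.Icc 1 n, ∀ ω, X' j ω = 0 ∨ X' j ω = 1)
    (hX'p1 : ∀ j ∈ Finset.Icc 1 n,
      μ₂ {ω | X' j ω = 1} = ENNReal.ofReal (α / (α + l * j)))
    (hX'p0 : ∀ j ∈ Finset.Icc 1 n,
      μ₂ {ω | X' j ω = 0} = ENNReal.ofReal (1 - α / (α + l * j))) :
    ∀ z : ℝ,
      (∫ ω, (1 + α / l) ^ (∑ j ∈ Finset.Icc 1 n, X j ω) ∂μ₁)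
        * (∫ ω, z ^ (∑ j ∈ Finset.Icc 1 n, X' j ω) ∂μ₂)
      = ∫ ω, (1 + α * z / l) ^ (∑ j ∈ Finset.Icc 1 n, X j ω) ∂μ₁ :=
  dimorphic_property_bernoulli_general μ₁ μ₂ α l hα hl n X hXmeas hXindep hXval hXp1 X' hX'meas
    hX'indep hX'val hX'p1
end

section
/- Let λ ≠ 0 be a real number, let n be a positive integer, let (X_j)_{1≤j≤n} be independent Bernoulli random variables with P{X_j = 1} = 1/j, and set Y_n = X_1 + ⋯ + X_n. Then for every real number x, x(x - λ)(x - 2λ)⋯(x - nλ) = Σ_{l=0}^{n} (-1)^{n-l} λ^{n-l} n! E[binom(Y_n, l)] x^{l+1}, where binom(Y_n, l) denotes the binomial coefficient of Y_n choose l. -/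
/-!
Writing `x - jλ = j (x / j - λ)` and expanding the product, the coefficient of `x ^ (l + 1)` is
`(-λ) ^ (n - l) n! e_l(1, 1/2, …, 1/n)`, with `e_l` the elementary symmetric polynomial.
For `0/1`-valued `X_j`, `C(Y_n, l) = e_l(X_1, …, X_n)`, since both count the `l`-subsets of
`{j | X_j = 1}`; by independence `E[∏_{j ∈ S} X_j] = ∏_{j ∈ S} 1/j`, so
`E[C(Y_n, l)] = e_l(1, 1/2, …, 1/n)`.
-/

open MeasureTheory ProbabilityTheory Finset

theorem Finset.prod_mul_add_eq_sum_powersetCard {ι R : Type*} [CommSemiring R] (s : Finset ι)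
    (w : ι → R) (x c : R) :
    ∏ i ∈ s, (x * w i + c)
      = ∑ m ∈ range (#s + 1), x ^ m * c ^ (#s - m) * ∑ S ∈ s.powersetCard m, ∏ i ∈ S, w i := by
  classical
  rw [prod_add, sum_powerset]
  refine sum_congr rfl fun m _ => ?_
  rw [mul_sum]
  refine sum_congr rfl fun S hS => ?_
  obtain ⟨hSs, rfl⟩ := mem_powersetCard.1 hS
  rw [prod_mul_distrib, prod_const, prod_const, card_sdiff_of_subset hSs]
  ring

theorem prod_range_sub_mul_eq_sum_powersetCard {K : Type*} [Field K] [CharZero K] (n : ℕ)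
    (l x : K) :
    ∏ k ∈ range (n + 1), (x - k * l)
      = ∑ m ∈ range (n + 1), (-1) ^ (n - m) * l ^ (n - m) * (n.factorial : K)
          * (∑ S ∈ (univ : Finset (Fin n)).powersetCard m, ∏ i ∈ S, ((i : K) + 1)⁻¹)
          * x ^ (m + 1) := by
  have hfactor : ∀ i : Fin n,
      x - ((i + 1 : ℕ) : K) * l = ((i : K) + 1) * (x * ((i : K) + 1)⁻¹ + -l) := fun i => by
    field_simp
    push_cast
    ring
  have hfactorial : ∏ i : Fin n, ((i : K) + 1) = n.factorial := by
    rw [← prod_range_add_one_eq_factorial, Nat.cast_prod, ← Fin.prod_univ_eq_prod_range]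
    push_cast
    rfl
  rw [prod_range_succ', ← Fin.prod_univ_eq_prod_range (fun k => x - ((k + 1 : ℕ) : K) * l),
    prod_congr rfl fun i _ => hfactor i, prod_mul_distrib, prod_mul_add_eq_sum_powersetCard,
    hfactorial, card_univ, Fintype.card_fin, mul_sum, sum_mul]
  refine sum_congr rfl fun m _ => ?_
  rw [neg_pow]
  ring

theorem Nat.choose_sum_eq_sum_powersetCard_prod {ι : Type*} (s : Finset ι) (f : ι → ℕ)
    (hf : ∀ i ∈ s, f i = 0 ∨ f i = 1) (m : ℕ) :
    (∑ i ∈ s, f i).choose m = ∑ S ∈ s.powersetCard m, ∏ i ∈ S, f i := by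
  classical
  have hboole : ∀ i ∈ s, f i = if f i = 1 then 1 else 0 := fun i hi => by
    rcases hf i hi with h | h <;> simp [h]
  have hprod : ∀ S ∈ s.powersetCard m, ∏ i ∈ S, f i = if ∀ i ∈ S, f i = 1 then 1 else 0 :=
    fun S hS => by
      rw [← prod_boole]
      exact prod_congr rfl fun i hi => hboole i ((mem_powersetCard.1 hS).1 hi)
  rw [sum_congr rfl hboole, sum_boole, sum_congr rfl hprod, sum_boole, Nat.cast_id, Nat.cast_id,
    ← card_powersetCard]
  congr 1
  ext S
  simp only [mem_filter, mem_powersetCard, subset_iff]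
  grind

section
variable {Ω : Type*} [MeasurableSpace Ω] {μ : Measure Ω}

theorem integral_natCast_eq_measureReal_of_forall_eq_zero_or_one {Z : Ω → ℕ}
    (hZ : Measurable Z) (h01 : ∀ ω, Z ω = 0 ∨ Z ω = 1) :
    ∫ ω, (Z ω : ℝ) ∂μ = μ.real {ω | Z ω = 1} := by
  have hind : (fun ω => (Z ω : ℝ)) = Set.indicator {ω | Z ω = 1} 1 := by
    funext ω
    rcases h01 ω with h | h <;> simp [h]
  rw [hind]
  exact integral_indicator_one (hZ (measurableSet_singleton 1))

theorem ProbabilityTheory.iIndepFun.integral_finset_prod_eq_prod_integral {ι 𝕜 : Type*}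
    [RCLike 𝕜] {Z : ι → Ω → 𝕜} (hZ : iIndepFun Z μ) (hm : ∀ i, AEStronglyMeasurable (Z i) μ)
    (S : Finset ι) :
    ∫ ω, ∏ i ∈ S, Z i ω ∂μ = ∏ i ∈ S, ∫ ω, Z i ω ∂μ := by
  simp_rw [← prod_coe_sort S]
  exact (hZ.precomp Subtype.val_injective).integral_fun_prod_eq_prod_integral fun i => hm i

theorem ProbabilityTheory.iIndepFun.integral_choose_sum_eq_sum_powersetCard {ι : Type*}
    [Fintype ι] {Z : ι → Ω → ℕ} (hZ : iIndepFun Z μ) (hm : ∀ i, Measurable (Z i))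
    (h01 : ∀ i ω, Z i ω = 0 ∨ Z i ω = 1) (m : ℕ) :
    ∫ ω, ((∑ i, Z i ω).choose m : ℝ) ∂μ
      = ∑ S ∈ (univ : Finset ι).powersetCard m, ∏ i ∈ S, μ.real {ω | Z i ω = 1} := by
  have := hZ.isProbabilityMeasure
  have hmR : ∀ i, Measurable fun ω => (Z i ω : ℝ) := fun i => measurable_from_top.comp (hm i)
  have hZR : iIndepFun (fun i ω => (Z i ω : ℝ)) μ := hZ.comp _ fun _ => measurable_from_top
  have hint : ∀ S : Finset ι, Integrable (fun ω => ∏ i ∈ S, (Z i ω : ℝ)) μ := fun S =>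
    .of_bound (Finset.measurable_prod S fun i _ => hmR i).aestronglyMeasurable 1 <| .of_forall
      fun ω => by
        rw [Real.norm_of_nonneg (by positivity)]
        exact prod_le_one (fun _ _ => by positivity) fun i _ => by
          rcases h01 i ω with h | h <;> simp [h]
  simp_rw [Nat.choose_sum_eq_sum_powersetCard_prod _ _ (fun i _ => h01 i _), Nat.cast_sum,
    Nat.cast_prod]
  rw [integral_finsetSum _ fun S _ => hint S]
  refine sum_congr rfl fun S _ => ?_
  rw [hZR.integral_finset_prod_eq_prod_integral (fun i => (hmR i).aestronglyMeasurable)]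
  exact prod_congr rfl fun i _ =>
    integral_natCast_eq_measureReal_of_forall_eq_zero_or_one (hm i) (h01 i)
end

theorem degFallingFactorial_expansion_expectation_choose_general
    {Ω : Type*} [MeasurableSpace Ω] (μ : Measure Ω)
    (l : ℝ)
    (n : ℕ) (X : ℕ → Ω → ℕ)
    (hmeas : ∀ j, Measurable (X j))
    (hindep : iIndepFun (fun i : Fin n => X (i.1 + 1)) μ)
    (hval : ∀ j ∈ Finset.Icc 1 n, ∀ ω, X j ω = 0 ∨ X j ω = 1)
    (hp1 : ∀ j ∈ Finset.Icc 1 n, μ {ω | X j ω = 1} = ENNReal.ofReal (1 / (j : ℝ))) :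
    ∀ x : ℝ,
      ∏ k ∈ Finset.range (n + 1), (x - k * l)
        = ∑ m ∈ Finset.range (n + 1),
            (-1) ^ (n - m) * l ^ (n - m) * (Nat.factorial n : ℝ)
              * (∫ ω, ((∑ j ∈ Finset.Icc 1 n, X j ω).choose m : ℝ) ∂μ)
              * x ^ (m + 1) := by
  intro x
  have hmem : ∀ i : Fin n, (i : ℕ) + 1 ∈ Icc 1 n := fun i => mem_Icc.2 ⟨by omega, i.2⟩
  have hsum : ∀ ω, ∑ j ∈ Icc 1 n, X j ω = ∑ i : Fin n, X (i + 1) ω := fun ω => by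
    rw [Fin.sum_univ_eq_sum_range (fun i => X (i + 1) ω), range_eq_Ico,
      sum_Ico_add' (fun j => X j ω), zero_add, Ico_add_one_right_eq_Icc]
  have hprob : ∀ i : Fin n, μ.real {ω | X (i + 1) ω = 1} = ((i : ℝ) + 1)⁻¹ := fun i => by
    rw [measureReal_def, hp1 _ (hmem i), ENNReal.toReal_ofReal (by positivity)]
    push_cast
    exact one_div _
  simp_rw [hsum, hindep.integral_choose_sum_eq_sum_powersetCard (fun i => hmeas _)
    (fun i => hval _ (hmem i)), hprob]
  exact prod_range_sub_mul_eq_sum_powersetCard n l x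

/-- For `λ ≠ 0` and `Y = X 1 + ⋯ + X n` a sum of independent Bernoulli random
variables with success probabilities `1/j`, for every real `x`,
`x(x-λ)(x-2λ)⋯(x-nλ) = ∑_{l=0}^{n} (-1)^{n-l} λ^{n-l} n! E[C(Y,l)] x^{l+1}`. -/
theorem degFallingFactorial_expansion_expectation_choose
    {Ω : Type*} [MeasurableSpace Ω] (μ : Measure Ω) [IsProbabilityMeasure μ]
    (l : ℝ) (hl : l ≠ 0)
    (n : ℕ) (hn : 0 < n) (X : ℕ → Ω → ℕ)
    (hmeas : ∀ j, Measurable (X j))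
    (hindep : iIndepFun (fun i : Fin n => X (i.1 + 1)) μ)
    (hval : ∀ j ∈ Finset.Icc 1 n, ∀ ω, X j ω = 0 ∨ X j ω = 1)
    (hp1 : ∀ j ∈ Finset.Icc 1 n, μ {ω | X j ω = 1} = ENNReal.ofReal (1 / (j : ℝ)))
    (hp0 : ∀ j ∈ Finset.Icc 1 n, μ {ω | X j ω = 0} = ENNReal.ofReal (1 - 1 / (j : ℝ))) :
    ∀ x : ℝ,
      ∏ k ∈ Finset.range (n + 1), (x - k * l)
        = ∑ m ∈ Finset.range (n + 1),
            (-1) ^ (n - m) * l ^ (n - m) * (Nat.factorial n : ℝ)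
              * (∫ ω, ((∑ j ∈ Finset.Icc 1 n, X j ω).choose m : ℝ) ∂μ)
              * x ^ (m + 1) :=
  degFallingFactorial_expansion_expectation_choose_general μ l n X hmeas hindep hval hp1
end

section
/- Let α > 0 and λ ∈ (0,1) be real numbers and let n be a positive integer. Let (X_{j,λ}(α))_{1≤j≤n} be independent Bernoulli random variables with P{X_{j,λ}(α) = 1} = α/(α + λj), and set Z_{n,λ}(α) = X_{1,λ}(α) + ⋯ + X_{n,λ}(α). Let S_1 : ℕ × ℕ → ℝ satisfy the defining identity of the Stirling numbers of the first kind, namely x(x-1)⋯(x-m+1) = Σ_{l=0}^{m} S_1(m,l) x^l for all real x and all m ≥ 0, and let S_{2,λ} : ℕ × ℕ → ℝ satisfy the defining identity of the degenerate Stirling numbers of the second kind, namely x(x-λ)⋯(x-(m-1)λ) = Σ_{l=0}^{m} S_{2,λ}(m,l) · x(x-1)⋯(x-l+1) for all real x and all m ≥ 0. Then for every integer l with 0 ≤ l ≤ n, (1/(2π)) ∫_{-π}^{π} E[e^{iθ(Z_{n,λ}(α) - l)}] dθ = (-1)^{n-l} (α^{l+1}/λ^{n+1}) (Γ(α/λ)/Γ(n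 + α/λ + 1)) Σ_{m=l}^{n} S_{2,λ}(n+1, m+1) S_1(m+1, l+1), where i = √(-1) and Γ denotes the Gamma function. -/
open MeasureTheory ProbabilityTheory Finset Complex
open Polynomial

/-!
Averaging `e^{-ikθ} E[e^{iθZ}]` over a period extracts the coefficient of `z^k` in the generating
polynomial `E[z^Z] = ∏ⱼ (1 - pⱼ + pⱼ z) = ∏ⱼ (λj + αz) / (α + λj)`. Since
`∏ⱼ (λj + αz) = (-1)ⁿ Q(-αz)` with `Q(x) = ∏_{j=1}^n (x - λj) = (x)_{n+1,λ} / x`, that coefficient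
is read off from the expansion of `(x)_{n+1,λ}` first into falling factorials and then into powers,
which produces `∑ₘ S_{2,λ}(n+1, m+1) S₁(m+1, k+1)`. The normalisation
`∏_{j=0}^n (α + λj) = λ^{n+1} Γ(n + α/λ + 1) / Γ(α/λ)` supplies the Gamma factor.
-/

lemma integral_exp_I_mul_intCast (m : ℤ) :
    ∫ θ in (-Real.pi)..Real.pi, exp (I * θ * m) = if m = 0 then 2 * (Real.pi : ℂ) else 0 := by
  split_ifs with hm
  · simp [hm]; ring
  · have hc : I * m ≠ 0 := mul_ne_zero I_ne_zero (Int.cast_ne_zero.mpr hm)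
    have hperiodic : exp (I * m * Real.pi) = exp (I * m * (-Real.pi : ℝ)) :=
      exp_eq_exp_iff_exists_int.mpr ⟨m, by push_cast; ring⟩
    simp_rw [show ∀ θ : ℝ, I * θ * m = I * m * θ from fun θ => by ring]
    rw [integral_exp_mul_complex hc, hperiodic, sub_self, zero_div]

lemma integral_eval_exp_div_exp_pow (P : ℂ[X]) (k : ℕ) :
    ∫ θ in (-Real.pi)..Real.pi, P.eval (exp (I * θ)) / exp (I * θ) ^ k
      = 2 * Real.pi * P.coeff k := by
  have hterm : ∀ (m : ℕ) (θ : ℝ),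
      exp (I * θ) ^ m / exp (I * θ) ^ k = exp (I * θ * ((m - k : ℤ) : ℂ)) := by
    intro m θ
    rw [← exp_nat_mul, ← exp_nat_mul, ← exp_sub]
    push_cast; ring_nf
  have hdeg : P.natDegree < P.natDegree + k + 1 := by omega
  simp_rw [eval_eq_sum_range' hdeg, Finset.sum_div, mul_div_assoc, hterm]
  rw [intervalIntegral.integral_finsetSum fun m _ =>
    (by fun_prop : Continuous _).intervalIntegrable _ _]
  simp_rw [intervalIntegral.integral_const_mul, integral_exp_I_mul_intCast, sub_eq_zero,
    Nat.cast_inj, mul_ite, mul_zero]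
  rw [Finset.sum_ite_eq', if_pos (by simp), mul_comm]

section Bernoulli

variable {Ω : Type*} [MeasurableSpace Ω] {μ : Measure Ω} [IsProbabilityMeasure μ]

lemma integral_exp_mul_of_bernoulli {Y : Ω → ℕ} (hY : Measurable Y)
    (hval : ∀ ω, Y ω = 0 ∨ Y ω = 1) (z : ℂ) :
    ∫ ω, exp (z * Y ω) ∂μ = 1 + μ.real {ω | Y ω = 1} * (exp z - 1) := by
  have hY1 : MeasurableSet {ω | Y ω = 1} := hY (measurableSet_singleton 1)
  have hpt : (fun ω => exp (z * Y ω))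
      = fun ω => {ω | Y ω = 1}.indicator (fun _ => exp z - 1) ω + 1 := by
    funext ω
    rcases hval ω with h | h <;> simp [h]
  rw [hpt, integral_add ((integrable_const _).indicator hY1) (integrable_const 1),
    integral_indicator_const _ hY1, integral_const, probReal_univ, one_smul, real_smul, add_comm]

variable {ι : Type*} [Fintype ι]

noncomputable def poissonBinomialPGF (p : ι → ℝ) : ℝ[X] :=
  ∏ i, (C (1 - p i) + C (p i) * X)

lemma integral_exp_mul_sum_of_iIndepFun_bernoulli {Y : ι → Ω → ℕ} (hY : ∀ i, Measurable (Y i))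
    (hindep : iIndepFun Y μ) (hval : ∀ i ω, Y i ω = 0 ∨ Y i ω = 1) {p : ι → ℝ}
    (hp : ∀ i, 0 ≤ p i) (hp1 : ∀ i, μ {ω | Y i ω = 1} = ENNReal.ofReal (p i)) (z : ℂ) :
    ∫ ω, exp (z * ∑ i, (Y i ω : ℂ)) ∂μ = aeval (exp z) (poissonBinomialPGF p) := by
  simp_rw [Finset.mul_sum, exp_sum]
  rw [hindep.integral_fun_prod_comp (X := Y) (f := fun _ (m : ℕ) => exp (z * m))
    (fun i => (hY i).aemeasurable) (fun _ => measurable_from_nat.aestronglyMeasurable)]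
  simp only [poissonBinomialPGF, map_prod, map_add, map_mul, aeval_C, aeval_X]
  refine Finset.prod_congr rfl fun i _ => ?_
  rw [integral_exp_mul_of_bernoulli (hY i) (hval i), measureReal_def, hp1 i,
    ENNReal.toReal_ofReal (hp i)]
  simp only [Complex.coe_algebraMap, ofReal_sub, ofReal_one]
  ring

end Bernoulli

lemma sum_stirling_mul_stirling_eq_coeff {l : ℝ} {S₁ S₂ : ℕ → ℕ → ℝ}
    (hS₁ : ∀ (m : ℕ) (x : ℝ),
      ∏ k ∈ range m, (x - k) = ∑ i ∈ range (m + 1), S₁ m i * x ^ i)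
    (hS₂ : ∀ (m : ℕ) (x : ℝ),
      ∏ k ∈ range m, (x - k * l) = ∑ i ∈ range (m + 1), S₂ m i * ∏ k ∈ range i, (x - k))
    (N r : ℕ) :
    ∑ i ∈ Icc r N, S₂ N i * S₁ i r = (∏ j ∈ range N, (X - C ((j : ℝ) * l))).coeff r := by
  have hfalling : ∀ m,
      ∏ k ∈ range m, (X - C (k : ℝ)) = ∑ i ∈ range (m + 1), C (S₁ m i) * X ^ i :=
    fun m => Polynomial.funext fun x => by
      simpa only [eval_prod, eval_finsetSum, eval_sub, eval_X, eval_C, eval_mul, eval_pow]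
        using hS₁ m x
  have hdegenerate : ∏ j ∈ range N, (X - C ((j : ℝ) * l))
      = ∑ i ∈ range (N + 1), C (S₂ N i) * ∏ k ∈ range i, (X - C (k : ℝ)) :=
    Polynomial.funext fun x => by
      simpa only [eval_prod, eval_finsetSum, eval_sub, eval_X, eval_C, eval_mul] using hS₂ N x
  simp only [hdegenerate, hfalling, finsetSum_coeff, coeff_C_mul, coeff_X_pow, mul_sum]
  simp only [mul_ite, mul_one, mul_zero, Finset.sum_ite_eq, mem_range, Nat.lt_succ_iff]
  rw [← Finset.sum_filter]
  congr 1
  ext i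
  simp only [mem_Icc, mem_filter, mem_range]
  omega

lemma coeff_prod_C_add_C_mul_X {R ι : Type*} [CommRing R] (s : Finset ι) (a : R) (b : ι → R)
    (k : ℕ) :
    (∏ i ∈ s, (C (b i) + C a * X)).coeff k
      = (-1) ^ #s * (-a) ^ k * (∏ i ∈ s, (X - C (b i))).coeff k := by
  have h : ∏ i ∈ s, (C (b i) + C a * X)
      = C ((-1) ^ #s) * (∏ i ∈ s, (X - C (b i))).comp (C (-a) * X) := by
    rw [Polynomial.prod_comp, map_pow, map_neg, map_one, ← prod_const, ← prod_mul_distrib]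
    refine prod_congr rfl fun i _ => ?_
    simp only [sub_comp, X_comp, C_comp, map_neg]; ring
  rw [h, coeff_C_mul, comp_C_mul_X_coeff]; ring

lemma coeff_poissonBinomialPGF {ι : Type*} [Fintype ι] {α : ℝ} {b : ι → ℝ}
    (hb : ∀ i, α + b i ≠ 0) (k : ℕ) :
    (poissonBinomialPGF fun i => α / (α + b i)).coeff k
      = (-1) ^ Fintype.card ι * (-α) ^ k / (∏ i, (α + b i)) * (∏ i, (X - C (b i))).coeff k := by
  have h : poissonBinomialPGF (fun i => α / (α + b i))
      = C (∏ i, (α + b i))⁻¹ * ∏ i, (C (b i) + C α * X) := by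
    rw [poissonBinomialPGF, ← prod_inv_distrib, map_prod, ← prod_mul_distrib]
    refine prod_congr rfl fun i _ => ?_
    rw [one_sub_div (hb i), add_sub_cancel_left, div_eq_inv_mul, div_eq_inv_mul, map_mul, map_mul]
    ring
  rw [h, coeff_C_mul, coeff_prod_C_add_C_mul_X, card_univ]
  field_simp

lemma sum_stirling_mul_stirling_succ_eq_coeff {l : ℝ} {S₁ S₂ : ℕ → ℕ → ℝ}
    (hS₁ : ∀ (m : ℕ) (x : ℝ),
      ∏ k ∈ range m, (x - k) = ∑ i ∈ range (m + 1), S₁ m i * x ^ i)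
    (hS₂ : ∀ (m : ℕ) (x : ℝ),
      ∏ k ∈ range m, (x - k * l) = ∑ i ∈ range (m + 1), S₂ m i * ∏ k ∈ range i, (x - k))
    (n k : ℕ) :
    ∑ m ∈ Icc k n, S₂ (n + 1) (m + 1) * S₁ (m + 1) (k + 1)
      = (∏ i : Fin n, (X - C (l * (i + 1 : ℕ)))).coeff k := by
  calc ∑ m ∈ Icc k n, S₂ (n + 1) (m + 1) * S₁ (m + 1) (k + 1)
      = ∑ i ∈ Icc (k + 1) (n + 1), S₂ (n + 1) i * S₁ i (k + 1) := by
        rw [← map_add_right_Icc, sum_map]; rfl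
    _ = (∏ j ∈ range (n + 1), (X - C ((j : ℝ) * l))).coeff (k + 1) :=
        sum_stirling_mul_stirling_eq_coeff hS₁ hS₂ _ _
    _ = _ := by
        rw [prod_range_succ', Nat.cast_zero, zero_mul, C_0, sub_zero, coeff_mul_X,
          Fin.prod_univ_eq_prod_range (fun i => X - C (l * (i + 1 : ℕ)))]
        simp_rw [mul_comm]

lemma Real.Gamma_add_nat_eq_mul_prod {x : ℝ} (hx : 0 < x) (m : ℕ) :
    Real.Gamma (x + m) = Real.Gamma x * ∏ j ∈ range m, (x + j) := by
  induction m with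
  | zero => simp
  | succ m ih =>
    rw [Nat.cast_succ, ← add_assoc, Real.Gamma_add_one (by positivity), ih, prod_range_succ]
    ring

lemma Real.Gamma_div_Gamma_add_nat_succ {α l : ℝ} (hα : 0 < α) (hl : 0 < l) (n : ℕ) :
    Real.Gamma (α / l) / Real.Gamma (n + α / l + 1)
      = l ^ (n + 1) / ∏ j ∈ range (n + 1), (α + l * j) := by
  have hx : 0 < α / l := div_pos hα hl
  have hprod : ∏ j ∈ range (n + 1), (α / l + j)
      = (∏ j ∈ range (n + 1), (α + l * j)) / l ^ (n + 1) := by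
    rw [show l ^ (n + 1) = ∏ _j ∈ range (n + 1), l by simp, ← prod_div_distrib]
    refine prod_congr rfl fun j _ => ?_
    field_simp
  rw [show (n : ℝ) + α / l + 1 = α / l + (n + 1 : ℕ) by push_cast; ring,
    Real.Gamma_add_nat_eq_mul_prod hx, hprod, mul_div_assoc', div_div_eq_mul_div,
    mul_div_mul_left _ _ (Real.Gamma_pos_of_pos hx).ne']

lemma sum_Icc_one_eq_sum_fin {M : Type*} [AddCommMonoid M] (f : ℕ → M) (n : ℕ) :
    ∑ j ∈ Icc 1 n, f j = ∑ i : Fin n, f (i + 1) := by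
  rw [← Ico_add_one_right_eq_Icc, sum_Ico_eq_sum_range, Nat.add_sub_cancel,
    ← Fin.sum_univ_eq_sum_range (fun i => f (1 + i))]
  simp_rw [add_comm 1]

lemma neg_one_pow_mul_neg_pow {R : Type*} [CommRing R] (a : R) {n k : ℕ} (hk : k ≤ n) :
    (-1) ^ n * (-a) ^ k = (-1) ^ (n - k) * a ^ k := by
  rw [neg_pow a, ← mul_assoc, ← pow_add, show n + k = n - k + 2 * k by omega, pow_add, pow_mul,
    neg_one_sq, one_pow, mul_one]

theorem integral_char_eq_sum_stirling_general
    {Ω : Type*} [MeasurableSpace Ω] (μ : Measure Ω) [IsProbabilityMeasure μ]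
    (α l : ℝ) (hα : 0 < α) (hl : l ∈ Set.Ioo (0 : ℝ) 1)
    (n : ℕ)
    (X' : ℕ → Ω → ℕ)
    (hX'meas : ∀ j, Measurable (X' j))
    (hX'indep : iIndepFun (fun i : Fin n => X' (i.1 + 1)) μ)
    (hX'val : ∀ j ∈ Finset.Icc 1 n, ∀ ω, X' j ω = 0 ∨ X' j ω = 1)
    (hX'p1 : ∀ j ∈ Finset.Icc 1 n,
      μ {ω | X' j ω = 1} = ENNReal.ofReal (α / (α + l * j)))
    (S₁ : ℕ → ℕ → ℝ)
    (hS₁ : ∀ (m : ℕ) (x : ℝ),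
      ∏ k ∈ Finset.range m, (x - k) = ∑ i ∈ Finset.range (m + 1), S₁ m i * x ^ i)
    (S₂ : ℕ → ℕ → ℝ)
    (hS₂ : ∀ (m : ℕ) (x : ℝ),
      ∏ k ∈ Finset.range m, (x - k * l)
        = ∑ i ∈ Finset.range (m + 1), S₂ m i * ∏ k ∈ Finset.range i, (x - k)) :
    ∀ k : ℕ, k ≤ n →
      (1 / (2 * Real.pi) : ℂ)
          * ∫ θ in (-Real.pi)..Real.pi,
              ∫ ω, Complex.exp
                (Complex.I * θ * (((∑ j ∈ Finset.Icc 1 n, X' j ω : ℕ) : ℂ) - k)) ∂μ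
        = ((((-1) ^ (n - k) * (α ^ (k + 1) / l ^ (n + 1))
              * (Real.Gamma (α / l) / Real.Gamma (n + α / l + 1))
              * ∑ m ∈ Finset.Icc k n, S₂ (n + 1) (m + 1) * S₁ (m + 1) (k + 1) : ℝ)) : ℂ) := by
  intro k hk
  have hl0 : 0 < l := hl.1
  have hIcc : ∀ i : Fin n, (i : ℕ) + 1 ∈ Icc 1 n := fun i => by simp
  have hchar : ∀ θ : ℝ, ∫ ω, exp (I * θ * (((∑ j ∈ Icc 1 n, X' j ω : ℕ) : ℂ) - k)) ∂μ
      = aeval (exp (I * θ)) (poissonBinomialPGF fun i : Fin n => α / (α + l * (i + 1 : ℕ)))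
        / exp (I * θ) ^ k := by
    intro θ
    simp_rw [sum_Icc_one_eq_sum_fin, Nat.cast_sum, mul_sub, exp_sub, ← exp_nat_mul,
      mul_comm (k : ℂ)]
    rw [integral_div, integral_exp_mul_sum_of_iIndepFun_bernoulli (fun i => hX'meas _) hX'indep
      (fun i => hX'val _ (hIcc i)) (fun i => by positivity) (fun i => hX'p1 _ (hIcc i))]
  have hgamma : Real.Gamma (α / l) / Real.Gamma (n + α / l + 1)
      = l ^ (n + 1) / (α * ∏ i : Fin n, (α + l * (i + 1 : ℕ))) := by
    rw [Real.Gamma_div_Gamma_add_nat_succ hα hl0, prod_range_succ',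
      Fin.prod_univ_eq_prod_range (fun i => α + l * (i + 1 : ℕ))]
    simp [mul_comm]
  simp_rw [hchar, aeval_def, eval₂_eq_eval_map, integral_eval_exp_div_exp_pow, coeff_map,
    coeff_poissonBinomialPGF (b := fun i : Fin n => l * (i + 1 : ℕ)) (fun i => by positivity)]
  rw [sum_stirling_mul_stirling_succ_eq_coeff hS₁ hS₂, hgamma, Fintype.card_fin,
    Complex.coe_algebraMap, ← mul_assoc, one_div_mul_cancel (by simp [Real.pi_ne_zero]), one_mul,
    ofReal_inj, neg_one_pow_mul_neg_pow α hk]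
  field_simp
  ring

/-- Theorem 4: With `Z = X' 1 + ⋯ + X' n` a sum of independent Bernoulli
random variables with success probabilities `α/(α + λj)`, and `S₁`, `S₂ₗ` satisfying the
defining identities of the (degenerate) Stirling numbers, for every `0 ≤ l ≤ n`,
`(1/(2π)) ∫_{-π}^{π} E[e^{iθ(Z - l)}] dθ
  = (-1)^{n-l} (α^{l+1}/λ^{n+1}) (Γ(α/λ)/Γ(n + α/λ + 1))
      ∑_{m=l}^{n} S₂ₗ(n+1, m+1) S₁(m+1, l+1)`. -/
theorem integral_char_eq_sum_stirling
    {Ω : Type*} [MeasurableSpace Ω] (μ : Measure Ω) [IsProbabilityMeasure μ]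
    (α l : ℝ) (hα : 0 < α) (hl : l ∈ Set.Ioo (0 : ℝ) 1)
    (n : ℕ) (hn : 0 < n)
    (X' : ℕ → Ω → ℕ)
    (hX'meas : ∀ j, Measurable (X' j))
    (hX'indep : iIndepFun (fun i : Fin n => X' (i.1 + 1)) μ)
    (hX'val : ∀ j ∈ Finset.Icc 1 n, ∀ ω, X' j ω = 0 ∨ X' j ω = 1)
    (hX'p1 : ∀ j ∈ Finset.Icc 1 n,
      μ {ω | X' j ω = 1} = ENNReal.ofReal (α / (α + l * j)))
    (hX'p0 : ∀ j ∈ Finset.Icc 1 n,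
      μ {ω | X' j ω = 0} = ENNReal.ofReal (1 - α / (α + l * j)))
    (S₁ : ℕ → ℕ → ℝ)
    (hS₁ : ∀ (m : ℕ) (x : ℝ),
      ∏ k ∈ Finset.range m, (x - k) = ∑ i ∈ Finset.range (m + 1), S₁ m i * x ^ i)
    (S₂ : ℕ → ℕ → ℝ)
    (hS₂ : ∀ (m : ℕ) (x : ℝ),
      ∏ k ∈ Finset.range m, (x - k * l)
        = ∑ i ∈ Finset.range (m + 1), S₂ m i * ∏ k ∈ Finset.range i, (x - k)) :
    ∀ k : ℕ, k ≤ n →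
      (1 / (2 * Real.pi) : ℂ)
          * ∫ θ in (-Real.pi)..Real.pi,
              ∫ ω, Complex.exp
                (Complex.I * θ * (((∑ j ∈ Finset.Icc 1 n, X' j ω : ℕ) : ℂ) - k)) ∂μ
        = ((((-1) ^ (n - k) * (α ^ (k + 1) / l ^ (n + 1))
              * (Real.Gamma (α / l) / Real.Gamma (n + α / l + 1))
              * ∑ m ∈ Finset.Icc k n, S₂ (n + 1) (m + 1) * S₁ (m + 1) (k + 1) : ℝ)) : ℂ) :=
  integral_char_eq_sum_stirling_general μ α l hα hl n X' hX'meas hX'indep hX'val hX'p1 S₁ hS₁ S₂ hS₂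
end
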